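/- arXiv:2205.06788 — 7 statements merged into one kernel-verified Lean document; each statement's English description precedes it below -/
import Mathlib

section
/- The dimension of the k-partition polytope Conv(F_n^k(m)) equals (k-1)(n-1). -/
open Finset Module

variable {ι κ ι' κ' : Type*} [Fintype ι] [Fintype κ] [Fintype ι'] [Fintype κ']

def zeroSum (ι κ : Type*) [Fintype ι] [Fintype κ] : Submodule ℝ (ι → κ → ℝ) where
  carrier := {M | (∀ j, ∑ i, M i j = 0) ∧ (∀ i, ∑ j, M i j = 0)}
  add_mem' := fun {a b} ha hb => ⟨fun j => by simp [Finset.sum_add_distrib, ha.1 j, hb.1 j],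
    fun i => by simp [Finset.sum_add_distrib, ha.2 i, hb.2 i]⟩
  zero_mem' := ⟨fun j => by simp, fun i => by simp⟩
  smul_mem' := fun c a ha => ⟨fun j => by simp [← Finset.mul_sum, ha.1 j],
    fun i => by simp [← Finset.mul_sum, ha.2 i]⟩

def extFun (N : ι' → κ' → ℝ) : Option ι' → Option κ' → ℝ
  | some i, some j => N i j
  | some i, none => -∑ j, N i j
  | none, some j => -∑ i, N i j
  | none, none => ∑ i, ∑ j, N i j

lemma sum_option_equiv (e : ι ≃ Option ι') (f : ι → ℝ) :
    ∑ i, f i = f (e.symm none) + ∑ i', f (e.symm (some i')) := by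
  rw [← Equiv.sum_comp e.symm f, Fintype.sum_option]

lemma extFun_mem (e1 : ι ≃ Option ι') (e2 : κ ≃ Option κ') (N : ι' → κ' → ℝ) :
    (fun a b => extFun N (e1 a) (e2 b)) ∈ zeroSum ι κ := by
  constructor
  · intro b
    rw [sum_option_equiv e1]
    simp only [Equiv.apply_symm_apply]
    rcases hb : e2 b with _ | j
    · simp [extFun, Finset.sum_neg_distrib]
    · simp [extFun, Finset.sum_neg_distrib]
  · intro a
    rw [sum_option_equiv e2]
    simp only [Equiv.apply_symm_apply]
    rcases ha : e1 a with _ | i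
    · show extFun N none none + _ = 0
      rw [show extFun N none none = ∑ j, ∑ i, N i j from Finset.sum_comm]
      simp [extFun, Finset.sum_neg_distrib]
    · simp [extFun, Finset.sum_neg_distrib]

def zsMap (e1 : ι ≃ Option ι') (e2 : κ ≃ Option κ') :
    zeroSum ι κ →ₗ[ℝ] (ι' → κ' → ℝ) where
  toFun M i j := M.1 (e1.symm (some i)) (e2.symm (some j))
  map_add' _ _ := rfl
  map_smul' _ _ := rfl

lemma zsMap_bij (e1 : ι ≃ Option ι') (e2 : κ ≃ Option κ') :
    Function.Bijective (zsMap e1 e2) := by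
  constructor
  · rw [injective_iff_map_eq_zero]
    intro M h
    have h' : ∀ i j, M.1 (e1.symm (some i)) (e2.symm (some j)) = 0 :=
      fun i j => congrFun (congrFun h i) j
    have step1 : ∀ i', M.1 (e1.symm (some i')) (e2.symm none) = 0 := by
      intro i'
      have hr := M.2.2 (e1.symm (some i'))
      rw [sum_option_equiv e2] at hr
      simpa [h'] using hr
    have step2 : ∀ b, M.1 (e1.symm none) (e2.symm b) = 0 := by
      intro b
      have hc := M.2.1 (e2.symm b)
      rw [sum_option_equiv e1] at hc
      rcases b with _ | j
      · simpa [step1] using hc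
      · simpa [h'] using hc
    apply Subtype.ext
    funext a b
    have : M.1 a b = M.1 (e1.symm (e1 a)) (e2.symm (e2 b)) := by simp
    rw [show ((0 : zeroSum ι κ) : ι → κ → ℝ) a b = 0 from rfl, this]
    rcases e1 a with _ | i <;> rcases e2 b with _ | j
    · exact step2 none
    · exact step2 (some j)
    · exact step1 i
    · exact h' i j
  · intro N
    refine ⟨⟨fun a b => extFun N (e1 a) (e2 b), extFun_mem e1 e2 N⟩, ?_⟩
    funext i j
    show extFun N (e1 (e1.symm (some i))) (e2 (e2.symm (some j))) = N i j
    simp [extFun]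

noncomputable def zsEquiv (e1 : ι ≃ Option ι') (e2 : κ ≃ Option κ') :
    zeroSum ι κ ≃ₗ[ℝ] (ι' → κ' → ℝ) :=
  LinearEquiv.ofBijective _ (zsMap_bij e1 e2)

lemma finrank_zeroSum (e1 : ι ≃ Option ι') (e2 : κ ≃ Option κ') :
    finrank ℝ (zeroSum ι κ) = Fintype.card ι' * Fintype.card κ' := by
  rw [(zsEquiv e1 e2).finrank_eq, Module.finrank_pi_fintype ℝ]
  simp [Module.finrank_pi]

lemma zsEquiv_symm_apply (e1 : ι ≃ Option ι') (e2 : κ ≃ Option κ') (N : ι' → κ' → ℝ) :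
    (((zsEquiv e1 e2).symm N : zeroSum ι κ) : ι → κ → ℝ)
      = fun a b => extFun N (e1 a) (e2 b) := by
  have key : zsEquiv e1 e2 ⟨fun a b => extFun N (e1 a) (e2 b), extFun_mem e1 e2 N⟩ = N := by
    funext i j
    show extFun N (e1 (e1.symm (some i))) (e2 (e2.symm (some j))) = N i j
    simp [extFun]
  have h2 := congrArg (zsEquiv e1 e2).symm key
  rw [LinearEquiv.symm_apply_apply] at h2
  rw [← h2]

lemma exists_fiber_fun (n k : ℕ) (m : Fin k → ℕ) (hsum : ∑ j, m j = n) :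
    ∃ h : Fin n → Fin k, ∀ j, Fintype.card {i // h i = j} = m j := by
  have hcard : Fintype.card (Fin n) = Fintype.card (Σ j, Fin (m j)) := by
    simp [Fintype.card_sigma, hsum]
  obtain ⟨e⟩ := Fintype.card_eq.mp hcard
  refine ⟨fun i => (e i).1, fun j => ?_⟩
  have e2 : {i // (e i).1 = j} ≃ {s : Σ j', Fin (m j') // s.1 = j} :=
    e.subtypeEquiv (fun i => Iff.rfl)
  have e3 : {s : Σ j', Fin (m j') // s.1 = j} ≃ Fin (m j) :=
    { toFun := fun s => Fin.cast (congrArg m s.2) s.1.2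
      invFun := fun x => ⟨⟨j, x⟩, rfl⟩
      left_inv := by rintro ⟨⟨j', x⟩, rfl⟩; rfl
      right_inv := fun x => rfl }
  rw [Fintype.card_congr (e2.trans e3), Fintype.card_fin]

lemma card_fiber_comp {n k : ℕ} (h : Fin n → Fin k) (σ : Equiv.Perm (Fin n)) (j : Fin k) :
    Fintype.card {i // h (σ i) = j} = Fintype.card {i // h i = j} :=
  Fintype.card_congr (σ.subtypeEquiv fun i => Iff.rfl)

lemma colsum_eq {n k : ℕ} (g : Fin n → Fin k) (j : Fin k) :
    ∑ i, (if g i = j then (1:ℝ) else 0) = Fintype.card {i // g i = j} := by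
  rw [Finset.sum_boole, Fintype.card_subtype]

/-- The dimension of the k-partition polytope Conv(F_n^k(m)) equals (k-1)(n-1). -/
theorem dim_partition_polytope (n k : ℕ) (hk : 2 ≤ k) (hkn : k ≤ n - 1)
    (m : Fin k → ℕ) (hm : ∀ j, 1 ≤ m j) (hsum : ∑ j, m j = n) :
    Module.finrank ℝ (vectorSpan ℝ (convexHull ℝ
      {P : Fin n → Fin k → ℝ |
        (∀ i j, P i j = 0 ∨ P i j = 1) ∧
        (∀ j, ∑ i, P i j = (m j : ℝ)) ∧
        (∀ i, ∑ j, P i j = 1)})) = (k - 1) * (n - 1) := by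
  classical
  have hn3 : 3 ≤ n := by omega
  have hn : n - 1 + 1 = n := by omega
  have hkk : k - 1 + 1 = k := by omega
  set F : Set (Fin n → Fin k → ℝ) := {P : Fin n → Fin k → ℝ |
        (∀ i j, P i j = 0 ∨ P i j = 1) ∧
        (∀ j, ∑ i, P i j = (m j : ℝ)) ∧
        (∀ i, ∑ j, P i j = 1)} with hFdef
  rw [← direction_affineSpan, affineSpan_convexHull, direction_affineSpan]
  let e1 : Fin n ≃ Option (Fin (n-1)) := (finCongr hn.symm).trans (finSuccEquiv (n-1))
  let e2 : Fin k ≃ Option (Fin (k-1)) := (finCongr hkk.symm).trans (finSuccEquiv (k-1))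
  -- upper bound inclusion
  have hsub : vectorSpan ℝ F ≤ zeroSum (Fin n) (Fin k) := by
    rw [vectorSpan_def, Submodule.span_le]
    rintro x hx
    obtain ⟨P, hP, Q, hQ, rfl⟩ := hx
    constructor
    · intro j
      have : ∀ i, (P -ᵥ Q) i j = P i j - Q i j := fun i => rfl
      simp only [this]
      rw [Finset.sum_sub_distrib, hP.2.1 j, hQ.2.1 j, sub_self]
    · intro i
      have : ∀ j, (P -ᵥ Q) i j = P i j - Q i j := fun j => rfl
      simp only [this]
      rw [Finset.sum_sub_distrib, hP.2.2 i, hQ.2.2 i, sub_self]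
  let B : Basis (Σ _ : Fin (n-1), Fin (k-1)) ℝ (Fin (n-1) → Fin (k-1) → ℝ) :=
    Pi.basis (fun _ : Fin (n-1) => Pi.basisFun ℝ (Fin (k-1)))
  have hB : ∀ (i : Fin (n-1)) (j : Fin (k-1)) (i' : Fin (n-1)) (j' : Fin (k-1)),
      B ⟨i, j⟩ i' j' = if i' = i ∧ j' = j then 1 else 0 := by
    intro i j i' j'
    simp only [B, Pi.basis_apply]
    rcases eq_or_ne i' i with rfl | hii
    · simp [Pi.single_apply, ite_and]
    · simp [Pi.single_eq_of_ne hii, hii, ite_and]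
  have key : ∀ x : Σ _ : Fin (n-1), Fin (k-1),
      (((zsEquiv e1 e2).symm (B x) : zeroSum (Fin n) (Fin k)) : Fin n → Fin k → ℝ)
        ∈ vectorSpan ℝ F := by
    rintro ⟨i, j⟩
    rw [zsEquiv_symm_apply]
    have hBrow : ∀ i' : Fin (n-1), ∑ j', B ⟨i,j⟩ i' j' = if i' = i then (1:ℝ) else 0 := by
      intro i'
      by_cases hii : i' = i <;> simp [hB, hii, ite_and, Finset.sum_ite_eq']
    have hBcol : ∀ j' : Fin (k-1), ∑ i', B ⟨i,j⟩ i' j' = if j' = j then (1:ℝ) else 0 := by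
      intro j'
      by_cases hjj : j' = j <;> simp [hB, hjj, ite_and, Finset.sum_ite_eq']
    have hBtot : ∑ i', ∑ j', B ⟨i,j⟩ i' j' = 1 := by
      simp [hBrow, Finset.sum_ite_eq']
    obtain ⟨h0, hh0⟩ := exists_fiber_fun n k m hsum
    let r1 := e1.symm (some i)
    let r0 := e1.symm none
    let c1 := e2.symm (some j)
    let c0 := e2.symm none
    have hr : r1 ≠ r0 := fun hcon => by simpa using e1.symm.injective hcon
    have hc : c1 ≠ c0 := fun hcon => by simpa using e2.symm.injective hcon
    have hfib1 : Nonempty {i' // h0 i' = c1} := by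
      rw [← Fintype.card_pos_iff, hh0]; exact hm c1
    obtain ⟨u, hu⟩ := hfib1
    have hfib0 : Nonempty {i' // h0 i' = c0} := by
      rw [← Fintype.card_pos_iff, hh0]; exact hm c0
    obtain ⟨v, hv⟩ := hfib0
    have huv : u ≠ v := by rintro rfl; exact hc (hu.symm.trans hv)
    let t1 := Equiv.swap r1 u
    let t2 := Equiv.swap (t1 r0) v
    let sg : Equiv.Perm (Fin n) := t1.trans t2
    have hs1 : sg r1 = u := by
      show t2 (t1 r1) = u
      rw [show t1 r1 = u from Equiv.swap_apply_left _ _]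
      apply Equiv.swap_apply_of_ne_of_ne
      · intro hcon
        exact hr (t1.injective ((Equiv.swap_apply_left r1 u).trans hcon))
      · exact huv
    have hs0 : sg r0 = v := Equiv.swap_apply_left _ _
    let g : Fin n → Fin k := fun a => h0 (sg a)
    let g' : Fin n → Fin k := fun a => h0 (sg (Equiv.swap r1 r0 a))
    have hg1 : g r1 = c1 := by show h0 (sg r1) = c1; rw [hs1, hu]
    have hg0 : g r0 = c0 := by show h0 (sg r0) = c0; rw [hs0, hv]
    have hg'1 : g' r1 = c0 := by
      show h0 (sg (Equiv.swap r1 r0 r1)) = c0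
      rw [Equiv.swap_apply_left, hs0, hv]
    have hg'0 : g' r0 = c1 := by
      show h0 (sg (Equiv.swap r1 r0 r0)) = c1
      rw [Equiv.swap_apply_right, hs1, hu]
    have hgfix : ∀ a, a ≠ r1 → a ≠ r0 → g' a = g a := by
      intro a h1 h2
      show h0 (sg (Equiv.swap r1 r0 a)) = h0 (sg a)
      rw [Equiv.swap_apply_of_ne_of_ne h1 h2]
    have memInd : ∀ gg : Fin n → Fin k, (∀ j', Fintype.card {a // gg a = j'} = m j') →
        (fun a b => if gg a = b then (1:ℝ) else 0) ∈ F := by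
      intro gg hgg
      simp only [hFdef, Set.mem_setOf_eq]
      refine ⟨fun a b => by by_cases h : gg a = b <;> simp [h], fun j' => ?_, fun a => ?_⟩
      · rw [colsum_eq, hgg]
      · rw [Finset.sum_ite_eq]
        simp
    have hPmem : (fun a b => if g a = b then (1:ℝ) else 0) ∈ F := by
      apply memInd
      intro j'
      exact (card_fiber_comp h0 sg j').trans (hh0 j')
    have hQmem : (fun a b => if g' a = b then (1:ℝ) else 0) ∈ F := by
      apply memInd
      intro j'
      exact (card_fiber_comp h0 ((Equiv.swap r1 r0).trans sg) j').trans (hh0 j')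
    have hdiff := vsub_mem_vectorSpan ℝ hPmem hQmem
    have heq : (fun a b => extFun (B ⟨i, j⟩) (e1 a) (e2 b))
        = (fun a b => if g a = b then (1:ℝ) else 0)
            -ᵥ (fun a b => if g' a = b then (1:ℝ) else 0) := by
      funext a b
      show extFun (B ⟨i,j⟩) (e1 a) (e2 b)
        = (if g a = b then (1:ℝ) else 0) - (if g' a = b then (1:ℝ) else 0)
      rcases hA : e1 a with _ | i'' <;> rcases hBb : e2 b with _ | j''
      · -- a = r0, b = c0
        have ha' : a = r0 := by rw [← Equiv.symm_apply_apply e1 a, hA]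
        have hb' : b = c0 := by rw [← Equiv.symm_apply_apply e2 b, hBb]
        subst ha'; subst hb'
        show ∑ i', ∑ j', B ⟨i,j⟩ i' j' = _
        rw [hBtot, hg0, hg'0, if_pos rfl, if_neg hc]
        norm_num
      · -- a = r0, b = some j''
        have ha' : a = r0 := by rw [← Equiv.symm_apply_apply e1 a, hA]
        have hb' : b = e2.symm (some j'') := by rw [← Equiv.symm_apply_apply e2 b, hBb]
        subst ha'; subst hb'
        show -∑ i', B ⟨i,j⟩ i' j'' = _
        rw [hBcol, hg0, hg'0]
        have h1 : ¬ (c0 = e2.symm (some j'')) := fun hcon => by simpa using e2.symm.injective hcon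
        have h2 : (c1 = e2.symm (some j'')) ↔ j = j'' := by
          constructor
          · intro hcon; simpa using e2.symm.injective hcon
          · rintro rfl; rfl
        rw [if_neg h1]
        by_cases hjj : j'' = j
        · rw [if_pos hjj, if_pos (h2.mpr hjj.symm)]; norm_num
        · rw [if_neg hjj, if_neg (fun hcon => hjj ((h2.mp hcon).symm))]; norm_num
      · -- a = some i'', b = c0
        have ha' : a = e1.symm (some i'') := by rw [← Equiv.symm_apply_apply e1 a, hA]
        have hb' : b = c0 := by rw [← Equiv.symm_apply_apply e2 b, hBb]
        subst ha'; subst hb'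
        show -∑ j', B ⟨i,j⟩ i'' j' = _
        rw [hBrow]
        by_cases hii : i'' = i
        · subst hii
          rw [if_pos rfl, hg1, hg'1, if_neg hc, if_pos rfl]
          norm_num
        · have hne1 : e1.symm (some i'') ≠ r1 :=
            fun hcon => hii (by simpa using e1.symm.injective hcon)
          have hne0 : e1.symm (some i'') ≠ r0 :=
            fun hcon => by simpa using e1.symm.injective hcon
          rw [if_neg hii, hgfix _ hne1 hne0]
          norm_num
      · -- a = some i'', b = some j''
        have ha' : a = e1.symm (some i'') := by rw [← Equiv.symm_apply_apply e1 a, hA]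
        have hb' : b = e2.symm (some j'') := by rw [← Equiv.symm_apply_apply e2 b, hBb]
        subst ha'; subst hb'
        show B ⟨i,j⟩ i'' j'' = _
        rw [hB]
        by_cases hii : i'' = i
        · subst hii
          rw [hg1, hg'1]
          have h2 : (c1 = e2.symm (some j'')) ↔ j = j'' := by
            constructor
            · intro hcon; simpa using e2.symm.injective hcon
            · rintro rfl; rfl
          have h1 : ¬ (c0 = e2.symm (some j'')) :=
            fun hcon => by simpa using e2.symm.injective hcon
          rw [if_neg h1]
          by_cases hjj : j'' = j
          · rw [if_pos ⟨rfl, hjj⟩, if_pos (h2.mpr hjj.symm)]; norm_num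
          · rw [if_neg (fun hcon => hjj hcon.2), if_neg (fun hcon => hjj ((h2.mp hcon).symm))]
            norm_num
        · have hne1 : e1.symm (some i'') ≠ r1 :=
            fun hcon => hii (by simpa using e1.symm.injective hcon)
          have hne0 : e1.symm (some i'') ≠ r0 :=
            fun hcon => by simpa using e1.symm.injective hcon
          rw [if_neg (fun hcon => hii hcon.1), hgfix _ hne1 hne0]
          norm_num
    rw [heq]
    exact hdiff
  have hupper : finrank ℝ (vectorSpan ℝ F) ≤ (n-1) * (k-1) := by
    have := Submodule.finrank_mono hsub
    rwa [finrank_zeroSum e1 e2, Fintype.card_fin, Fintype.card_fin] at this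
  have hlower : (n-1) * (k-1) ≤ finrank ℝ (vectorSpan ℝ F) := by
    have hind : LinearIndependent ℝ
        (fun x : Σ _ : Fin (n-1), Fin (k-1) =>
          (((zsEquiv e1 e2).symm (B x) : zeroSum (Fin n) (Fin k)) : Fin n → Fin k → ℝ)) := by
      have h1 := B.linearIndependent
      have h2 := h1.map' ((zeroSum (Fin n) (Fin k)).subtype.comp
        (zsEquiv e1 e2).symm.toLinearMap)
        (LinearMap.ker_eq_bot_of_injective
          (Subtype.val_injective.comp (zsEquiv e1 e2).symm.injective))
      exact h2
    let v : (Σ _ : Fin (n-1), Fin (k-1)) → (vectorSpan ℝ F) :=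
      fun x => ⟨_, key x⟩
    have hindv : LinearIndependent ℝ v := by
      apply LinearIndependent.of_comp (vectorSpan ℝ F).subtype
      exact hind
    have := hindv.fintype_card_le_finrank
    simpa using this
  have : finrank ℝ (vectorSpan ℝ F) = (n-1) * (k-1) := le_antisymm hupper hlower
  rw [this, Nat.mul_comm]
end

section
/- If Y is an n×n real symmetric positive semidefinite matrix with diag(Y) = 1_n and Y·1_n = (n/2)·1_n, then all entries of Y are nonnegative. -/
open Matrix

/-- If Y is an n×n real symmetric PSD matrix with diag(Y) = 1 and Y·1 = (n/2)·1,
then all entries of Y are nonnegative. -/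
theorem entrywise_nonneg_of_equicut_feasible (n : ℕ) (Y : Matrix (Fin n) (Fin n) ℝ)
    (hY : Y.PosSemidef) (hdiag : ∀ i, Y i i = 1)
    (hrow : Y *ᵥ (fun _ => (1 : ℝ)) = fun _ => (n : ℝ) / 2) :
    ∀ i j, 0 ≤ Y i j := by
  intro i j
  have hn : (0:ℝ) < n := by exact_mod_cast i.pos
  have hsym : ∀ a b, Y a b = Y b a := fun a b => by
    simpa using hY.1.apply b a
  have hrowsum : ∀ a, ∑ l, Y a l = (n:ℝ) / 2 := fun a => by
    have := congrFun hrow a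
    simpa [mulVec, dotProduct] using this
  have hcol : ∀ a, ∑ k, Y k a = (n:ℝ) / 2 := fun a => by
    rw [Finset.sum_congr rfl fun k _ => hsym k a]
    exact hrowsum a
  set x : Fin n → ℝ := fun k => (Pi.single i 1 : Fin n → ℝ) k + (Pi.single j 1 : Fin n → ℝ) k - 2 / n with hxdef
  have h := hY.dotProduct_mulVec_nonneg x
  have hinner : ∀ k, (Y *ᵥ x) k = Y k i + Y k j - 1 := by
    intro k
    have : (Y *ᵥ x) k
        = ∑ l, (Y k l * (Pi.single i 1 : Fin n → ℝ) l + Y k l * (Pi.single j 1 : Fin n → ℝ) l - Y k l * (2/n)) := by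
      simp [mulVec, dotProduct, hxdef, mul_add, mul_sub]
    rw [this, Finset.sum_sub_distrib, Finset.sum_add_distrib, ← Finset.sum_mul,
      hrowsum k]
    have h1 : ∑ l, Y k l * (Pi.single i 1 : Fin n → ℝ) l = Y k i := by
      simp [Pi.single_apply, mul_ite]
    have h2 : ∑ l, Y k l * (Pi.single j 1 : Fin n → ℝ) l = Y k j := by
      simp [Pi.single_apply, mul_ite]
    rw [h1, h2]
    field_simp
  have hquad : star x ⬝ᵥ (Y *ᵥ x) = 2 * Y i j := by
    have : star x ⬝ᵥ (Y *ᵥ x)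
        = ∑ k, ((Pi.single i 1 : Fin n → ℝ) k * (Y k i + Y k j - 1)
            + (Pi.single j 1 : Fin n → ℝ) k * (Y k i + Y k j - 1)
            - (2/n) * (Y k i + Y k j - 1)) := by
      simp only [dotProduct, star_trivial, hxdef]
      exact Finset.sum_congr rfl fun k _ => by rw [hinner k]; ring
    rw [this, Finset.sum_sub_distrib, Finset.sum_add_distrib]
    have h1 : ∑ k, (Pi.single i 1 : Fin n → ℝ) k * (Y k i + Y k j - 1) = Y i i + Y i j - 1 := by
      simp [Pi.single_apply, ite_mul]
    have h2 : ∑ k, (Pi.single j 1 : Fin n → ℝ) k * (Y k i + Y k j - 1) = Y j i + Y j j - 1 := by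
      simp [Pi.single_apply, ite_mul]
    have h3 : ∑ k, (2/(n:ℝ)) * (Y k i + Y k j - 1) = 0 := by
      rw [← Finset.mul_sum]
      have : ∑ k, (Y k i + Y k j - 1) = 0 := by
        rw [Finset.sum_sub_distrib, Finset.sum_add_distrib, hcol i, hcol j]
        simp
      rw [this, mul_zero]
    rw [h1, h2, h3, hdiag i, hdiag j, hsym j i]
    ring
  have := hquad ▸ h
  linarith
end

section
/- If Y is an n×n symmetric PSD matrix with diag(Y)=1_n and Y·1_n=(n/2)·1_n, then the matrix Z := 2Y - J_n is positive semidefinite, where J_n is the all-ones matrix. -/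
open Matrix

/-- If Y is an n×n symmetric PSD matrix with diag(Y)=1 and Y·1=(n/2)·1, then
Z := 2Y - J_n is positive semidefinite, where J_n is the all-ones matrix. -/
theorem two_smul_sub_allOnes_posSemidef (n : ℕ) (Y : Matrix (Fin n) (Fin n) ℝ)
    (hY : Y.PosSemidef) (hdiag : ∀ i, Y i i = 1)
    (hrow : Y *ᵥ (fun _ => (1 : ℝ)) = fun _ => (n : ℝ) / 2) :
    ((2 : ℝ) • Y - Matrix.of fun _ _ => (1 : ℝ)).PosSemidef := by
  obtain ⟨B, hB⟩ : ∃ B : Matrix (Fin n) (Fin n) ℝ, Y = Bᴴ * B := by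
    open scoped MatrixOrder in
    exact CStarAlgebra.nonneg_iff_eq_star_mul_self.mp hY.nonneg
  refine Matrix.PosSemidef.of_dotProduct_mulVec_nonneg ?_ ?_
  · unfold Matrix.IsHermitian
    ext i j
    have := congrFun (congrFun hY.1 i) j
    simp only [Matrix.conjTranspose_apply, star_trivial] at this
    simp [Matrix.conjTranspose_apply, Matrix.sub_apply, this]
  · intro x
    simp only [RCLike.re_to_real, star_trivial]
    have key : ∀ a v : Fin n → ℝ,
        a ⬝ᵥ (Y *ᵥ v) = ∑ i, (B *ᵥ a) i * (B *ᵥ v) i := by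
      intro a v
      rw [hB, ← Matrix.mulVec_mulVec, dotProduct_mulVec]
      simp [Matrix.vecMul_transpose, dotProduct]
    set u : Fin n → ℝ := B *ᵥ x with hu
    set w : Fin n → ℝ := B *ᵥ (fun _ => (1:ℝ)) with hw
    have hq : x ⬝ᵥ (Y *ᵥ x) = ∑ i, u i ^ 2 := by
      rw [key x x]; exact Finset.sum_congr rfl fun i _ => (sq (u i)).symm
    set s : ℝ := ∑ i, x i with hs
    have h1 : x ⬝ᵥ (Y *ᵥ (fun _ => (1:ℝ))) = ∑ i, u i * w i := key x _
    have h1' : x ⬝ᵥ (Y *ᵥ (fun _ => (1:ℝ))) = (n : ℝ) / 2 * s := by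
      rw [hrow]
      simp [dotProduct, hs, Finset.sum_mul, mul_comm]
    have hone : (fun _ => (1:ℝ)) ⬝ᵥ (Y *ᵥ (fun _ => (1:ℝ))) = (n:ℝ) * (n:ℝ) / 2 := by
      rw [hrow]
      simp [dotProduct]
      ring
    have hone' : (fun _ => (1:ℝ)) ⬝ᵥ (Y *ᵥ (fun _ => (1:ℝ))) = ∑ i, w i ^ 2 := by
      rw [key]; exact Finset.sum_congr rfl fun i _ => (sq (w i)).symm
    have hcs := Finset.sum_mul_sq_le_sq_mul_sq Finset.univ w u
    have hmain : s ^ 2 ≤ 2 * (x ⬝ᵥ (Y *ᵥ x)) := by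
      rcases Nat.eq_zero_or_pos n with hn | hn
      · subst hn
        simp [hs, hq]
      · have hwu : (∑ i, w i * u i) = (n:ℝ)/2 * s := by
          rw [← h1', h1]
          exact Finset.sum_congr rfl fun i _ => mul_comm _ _
        rw [hwu, ← hone', hone, ← hq] at hcs
        have hn' : (0:ℝ) < (n:ℝ) := by exact_mod_cast hn
        nlinarith [hcs, sq_nonneg s, mul_pos hn' hn']
    have expand : x ⬝ᵥ (((2 : ℝ) • Y - Matrix.of fun _ _ => (1 : ℝ)) *ᵥ x)
        = 2 * (x ⬝ᵥ (Y *ᵥ x)) - s ^ 2 := by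
      rw [Matrix.sub_mulVec, dotProduct_sub]
      congr 1
      · rw [Matrix.smul_mulVec, dotProduct_smul, smul_eq_mul]
      · simp [Matrix.mulVec, dotProduct, hs, sq, Finset.sum_mul, Finset.mul_sum]
        rw [Finset.sum_comm]
    rw [expand]
    linarith
end

section
/- Let V ∈ R^{n×(n-1)} with V^T 1_n = 0 and rank(V) = n-1. Then { Y ∈ S^n : diag(Y)=1_n, Y·1_n = (n/k)·1_n } = { (1/k)J_n + V R V^T : R ∈ S^{n-1}, diag(V R V^T) = ((k-1)/k)·1_n }. -/
open Matrix

/-- Parametrization of the feasible set of the equipartition SDP relaxation: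
{ Y ∈ S^n : diag(Y)=1, Y·1 = (n/k)·1 } =
{ (1/k)J + V R Vᵀ : R ∈ S^{n-1}, diag(V R Vᵀ) = ((k-1)/k)·1 }. -/
theorem equipartition_feasible_set_parametrization (n : ℕ) (hn : 2 ≤ n) (k : ℝ) (hk : 0 < k)
    (V : Matrix (Fin n) (Fin (n - 1)) ℝ)
    (hV1 : Vᵀ *ᵥ (fun _ => (1 : ℝ)) = 0) (hVrank : V.rank = n - 1) :
    {Y : Matrix (Fin n) (Fin n) ℝ |
        Y.IsSymm ∧ (∀ i, Y i i = 1) ∧ Y *ᵥ (fun _ => (1 : ℝ)) = fun _ => (n : ℝ) / k} =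
    {Y : Matrix (Fin n) (Fin n) ℝ |
        ∃ R : Matrix (Fin (n - 1)) (Fin (n - 1)) ℝ, R.IsSymm ∧
          Y = (1 / k) • (Matrix.of fun _ _ => (1 : ℝ)) + V * R * Vᵀ ∧
          ∀ i, (V * R * Vᵀ) i i = (k - 1) / k} := by
  have hk0 : k ≠ 0 := ne_of_gt hk
  -- column sums of V vanish
  have hcol : ∀ j, ∑ i, V i j = 0 := by
    intro j
    have := congrFun hV1 j
    simpa [mulVec, dotProduct] using this
  -- the coordinate-sum functional
  set g : Module.Dual ℝ (Fin n → ℝ) := ∑ i, LinearMap.proj i with hgdef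
  have hg : ∀ x : Fin n → ℝ, g x = ∑ i, x i := by
    intro x; simp [hgdef]
  have hg0 : g ≠ 0 := by
    intro h
    have h0 : (0:ℕ) < n := by omega
    have : g (Pi.single (⟨0, h0⟩ : Fin n) 1) = 0 := by rw [h]; rfl
    rw [hg] at this
    simp at this
  have hkerg : Module.finrank ℝ (LinearMap.ker g) + 1 = n := by
    simpa using Module.Dual.finrank_ker_add_one_of_ne_zero hg0
  -- the range of V is exactly the kernel of g
  have hrange_le : LinearMap.range V.mulVecLin ≤ LinearMap.ker g := by
    rintro x ⟨y, rfl⟩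
    rw [LinearMap.mem_ker, hg]
    simp only [mulVecLin_apply, mulVec, dotProduct]
    rw [Finset.sum_comm]
    simp [← Finset.sum_mul, hcol]
  have hrank' : Module.finrank ℝ (LinearMap.range V.mulVecLin) = n - 1 := hVrank
  have hrange_eq : LinearMap.range V.mulVecLin = LinearMap.ker g :=
    Submodule.eq_of_le_of_finrank_eq hrange_le (by rw [hrank']; omega)
  -- V is injective
  have hVker : LinearMap.ker V.mulVecLin = ⊥ := by
    have h1 : Module.finrank ℝ (LinearMap.range V.mulVecLin)
        + Module.finrank ℝ (LinearMap.ker V.mulVecLin) = n - 1 := by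
      have := LinearMap.finrank_range_add_finrank_ker V.mulVecLin
      rwa [Module.finrank_fin_fun] at this
    have : Module.finrank ℝ (LinearMap.ker V.mulVecLin) = 0 := by omega
    exact Submodule.finrank_eq_zero.mp this
  -- the Gram matrix is invertible
  set G : Matrix (Fin (n-1)) (Fin (n-1)) ℝ := Vᵀ * V with hGdef
  have hGunit : IsUnit G := by
    rw [← Matrix.mulVec_injective_iff_isUnit]
    have hker : LinearMap.ker G.mulVecLin = ⊥ := by
      rw [hGdef, Matrix.ker_mulVecLin_transpose_mul_self, hVker]
    have hinj := LinearMap.ker_eq_bot.mp hker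
    intro x y hxy
    exact hinj (by simpa [mulVecLin_apply] using hxy)
  have hGdet : IsUnit G.det := (Matrix.isUnit_iff_isUnit_det G).mp hGunit
  have hGinvG : G⁻¹ * G = 1 := Matrix.nonsing_inv_mul G hGdet
  have hGsymm : Gᵀ = G := by rw [hGdef, Matrix.transpose_mul, Matrix.transpose_transpose]
  have hGinvT : (G⁻¹)ᵀ = G⁻¹ := by rw [Matrix.transpose_nonsing_inv, hGsymm]
  -- the projection matrix
  set P : Matrix (Fin n) (Fin n) ℝ := V * G⁻¹ * Vᵀ with hPdef
  have hPT : Pᵀ = P := by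
    rw [hPdef, Matrix.transpose_mul, Matrix.transpose_mul, Matrix.transpose_transpose, hGinvT,
      Matrix.mul_assoc]
  have hPfix : ∀ x : Fin n → ℝ, (∑ i, x i) = 0 → P *ᵥ x = x := by
    intro x hx
    have hxmem : x ∈ LinearMap.range V.mulVecLin := by
      rw [hrange_eq, LinearMap.mem_ker, hg]; exact hx
    obtain ⟨y, rfl⟩ := hxmem
    simp only [mulVecLin_apply, Matrix.mulVec_mulVec]
    rw [hPdef, Matrix.mul_assoc, Matrix.mul_assoc, ← hGdef, hGinvG, Matrix.mul_one]
  ext Y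
  simp only [Set.mem_setOf_eq]
  constructor
  · rintro ⟨hsymm, hdiag, hrow⟩
    set J : Matrix (Fin n) (Fin n) ℝ := Matrix.of fun _ _ => (1:ℝ) with hJdef
    set M : Matrix (Fin n) (Fin n) ℝ := Y - (1/k) • J with hMdef
    have hMsymm : Mᵀ = M := by
      rw [hMdef, Matrix.transpose_sub, Matrix.transpose_smul, hsymm.eq]
      congr 1
    have hMrow : ∀ i, ∑ j, M i j = 0 := by
      intro i
      have h1 := congrFun hrow i
      simp only [mulVec, dotProduct, mul_one] at h1
      simp [hMdef, hJdef, Finset.sum_sub_distrib, h1, div_eq_mul_inv, mul_comm]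
    have hMcol : ∀ j, ∑ i, M i j = 0 := by
      intro j
      have h2 : ∀ i, M i j = M j i := fun i => (congrFun (congrFun hMsymm i) j).symm
      simp only [h2]
      exact hMrow j
    -- P * M = M
    have hPM : P * M = M := by
      ext i j
      have := congrFun (hPfix (fun l => M l j) (hMcol j)) i
      simpa [Matrix.mul_apply, mulVec, dotProduct] using this
    have hMP : M * P = M := by
      have h := congrArg Matrix.transpose hPM
      rwa [Matrix.transpose_mul, hPT, hMsymm] at h
    refine ⟨G⁻¹ * Vᵀ * M * V * G⁻¹, ?_, ?_, ?_⟩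
    · show _ = _
      simp only [Matrix.transpose_mul, Matrix.transpose_transpose, hGinvT, hMsymm,
        Matrix.mul_assoc]
    · have hVRV : V * (G⁻¹ * Vᵀ * M * V * G⁻¹) * Vᵀ = M := by
        have h1 : V * (G⁻¹ * Vᵀ * M * V * G⁻¹) * Vᵀ = P * M * P := by
          simp only [hPdef, Matrix.mul_assoc]
        rw [h1, hPM, hMP]
      rw [hVRV, hMdef]
      ring_nf
      abel
    · intro i
      have hVRV : V * (G⁻¹ * Vᵀ * M * V * G⁻¹) * Vᵀ = M := by
        have h1 : V * (G⁻¹ * Vᵀ * M * V * G⁻¹) * Vᵀ = P * M * P := by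
          simp only [hPdef, Matrix.mul_assoc]
        rw [h1, hPM, hMP]
      rw [hVRV, hMdef]
      simp only [Matrix.sub_apply, Matrix.smul_apply, hJdef, Matrix.of_apply, smul_eq_mul,
        mul_one, hdiag i]
      field_simp
  · rintro ⟨R, hRsymm, rfl, hdiagR⟩
    have hVRVT : (V * R * Vᵀ)ᵀ = V * R * Vᵀ := by
      rw [Matrix.transpose_mul, Matrix.transpose_mul, Matrix.transpose_transpose, hRsymm.eq,
        Matrix.mul_assoc]
    refine ⟨?_, ?_, ?_⟩
    · show _ = _
      rw [Matrix.transpose_add, Matrix.transpose_smul, hVRVT]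
      congr 1
    · intro i
      have := hdiagR i
      simp only [Matrix.add_apply, Matrix.smul_apply, Matrix.of_apply, smul_eq_mul, mul_one, this]
      field_simp
      ring
    · have hzero : (V * R * Vᵀ) *ᵥ (fun _ => (1:ℝ)) = 0 := by
        rw [← Matrix.mulVec_mulVec, ← Matrix.mulVec_mulVec, hV1, Matrix.mulVec_zero,
          Matrix.mulVec_zero]
      rw [Matrix.add_mulVec, hzero, Matrix.smul_mulVec]
      funext i
      simp only [Pi.add_apply, Pi.zero_apply, add_zero, Pi.smul_apply, smul_eq_mul, mulVec,
        dotProduct, Matrix.of_apply, one_mul]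
      simp [div_eq_mul_inv, mul_comm]
end

section
/- The matrix R̂ = (n(k-1)/(k(n-1)))·I_{n-1} - ((k-1)/(k(n-1)))·J_{n-1} is positive definite, and with V = [I_{n-1}; -1_{n-1}^T] one has (1/k)J_n + V R̂ V^T = (n(k-1)/(k(n-1)))·I_n + ((n-k)/(k(n-1)))·J_n, which is entrywise strictly positive when 2 ≤ k ≤ n-1. -/
open Matrix

private lemma aux_sum_last {m : ℕ} (i : Fin (m + 1)) (hi : (i : ℕ) = m) (g : Fin m → ℝ) :
    ∑ l : Fin m, (if (i : ℕ) = (l : ℕ) then (1:ℝ) else if (i : ℕ) = m then -1 else 0) * g l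
      = -∑ l : Fin m, g l := by
  rw [← Finset.sum_neg_distrib]
  refine Finset.sum_congr rfl fun l _ => ?_
  have hl : (l : ℕ) < m := l.isLt
  have h1 : ¬((i : ℕ) = (l : ℕ)) := by omega
  rw [if_neg h1, if_pos hi]
  ring

private lemma aux_sum_lt {m : ℕ} (i : Fin (m + 1)) (hi : (i : ℕ) < m) (g : Fin m → ℝ) :
    ∑ l : Fin m, (if (i : ℕ) = (l : ℕ) then (1:ℝ) else if (i : ℕ) = m then -1 else 0) * g l
      = g ⟨i, hi⟩ := by
  have hm : ¬((i : ℕ) = m) := by omega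
  rw [Finset.sum_eq_single ⟨(i : ℕ), hi⟩]
  · simp
  · intro l _ hl
    have h1 : ¬((i : ℕ) = (l : ℕ)) := by
      intro h; exact hl (Fin.ext h.symm)
    simp [h1, hm]
  · simp

private lemma aux_const_sum (m : ℕ) (A B : ℝ) (j : Fin m) :
    ∑ l : Fin m, (A * (if l = j then (1:ℝ) else 0) - B) = A - m * B := by
  rw [Finset.sum_sub_distrib]
  simp [mul_ite, Finset.sum_ite_eq', Finset.card_univ, mul_comm]

private lemma key_calc (m : ℕ) (A B : ℝ) (hAB : A = (m + 1) * B) (i i' : Fin (m + 1)) :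
    ∑ j : Fin m,
      (∑ l : Fin m,
          (if (i : ℕ) = (l : ℕ) then (1:ℝ) else if (i : ℕ) = m then -1 else 0)
            * (A * (if l = j then (1:ℝ) else 0) - B))
        * (if (i' : ℕ) = (j : ℕ) then (1:ℝ) else if (i' : ℕ) = m then -1 else 0)
      = A * (if i = i' then 1 else 0) - B := by
  by_cases hi : (i : ℕ) = m
  · have hinner : ∀ j : Fin m,
        (∑ l : Fin m,
          (if (i : ℕ) = (l : ℕ) then (1:ℝ) else if (i : ℕ) = m then -1 else 0)
            * (A * (if l = j then (1:ℝ) else 0) - B)) = -(A - m * B) := by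
      intro j
      rw [aux_sum_last i hi, aux_const_sum]
    simp only [hinner]
    rw [Finset.sum_congr rfl (fun j _ => mul_comm _ _)]
    by_cases hi' : (i' : ℕ) = m
    · rw [aux_sum_last i' hi']
      have hii : i = i' := Fin.ext (by omega)
      rw [if_pos hii]
      simp only [Finset.sum_const, Finset.card_univ, Fintype.card_fin, nsmul_eq_mul]
      rw [hAB]; ring
    · have hi'lt : (i' : ℕ) < m := by have := i'.isLt; omega
      rw [aux_sum_lt i' hi'lt]
      have hii : ¬(i = i') := by intro h; rw [h] at hi; exact hi' hi
      rw [if_neg hii, hAB]; ring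
  · have hilt : (i : ℕ) < m := by have := i.isLt; omega
    have hinner : ∀ j : Fin m,
        (∑ l : Fin m,
          (if (i : ℕ) = (l : ℕ) then (1:ℝ) else if (i : ℕ) = m then -1 else 0)
            * (A * (if l = j then (1:ℝ) else 0) - B))
        = A * (if (⟨(i : ℕ), hilt⟩ : Fin m) = j then (1:ℝ) else 0) - B := by
      intro j
      rw [aux_sum_lt i hilt]
    simp only [hinner]
    rw [Finset.sum_congr rfl (fun j _ => mul_comm _ _)]
    by_cases hi' : (i' : ℕ) = m
    · rw [aux_sum_last i' hi']
      have hii : ¬(i = i') := by intro h; rw [← h] at hi'; exact hi hi'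
      rw [if_neg hii]
      rw [show (∑ j : Fin m, (A * (if (⟨(i : ℕ), hilt⟩ : Fin m) = j then (1:ℝ) else 0) - B))
          = A - m * B from by
        rw [Finset.sum_sub_distrib]; simp [mul_ite, Finset.sum_ite_eq, Finset.card_univ, mul_comm]]
      rw [hAB]; ring
    · have hi'lt : (i' : ℕ) < m := by have := i'.isLt; omega
      rw [aux_sum_lt i' hi'lt]
      by_cases hii : i = i'
      · have : (⟨(i : ℕ), hilt⟩ : Fin m) = ⟨(i' : ℕ), hi'lt⟩ := Fin.ext (by simp [hii])
        rw [if_pos hii, if_pos this]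
      · have : ¬((⟨(i : ℕ), hilt⟩ : Fin m) = ⟨(i' : ℕ), hi'lt⟩) := by
          intro h; exact hii (Fin.ext (by simpa using congrArg Fin.val h))
        rw [if_neg hii, if_neg this]

/-- R̂ = (n(k-1)/(k(n-1)))·I - ((k-1)/(k(n-1)))·J is positive definite, and with
V = [I_{n-1}; -1ᵀ] one has (1/k)J_n + V R̂ Vᵀ = (n(k-1)/(k(n-1)))·I_n + ((n-k)/(k(n-1)))·J_n,
which is entrywise strictly positive when 2 ≤ k ≤ n-1. -/
theorem slater_point_equipartition (n k : ℕ) (hn : 3 ≤ n) (hk : 2 ≤ k) (hkn : k ≤ n - 1) :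
    let Rhat : Matrix (Fin (n - 1)) (Fin (n - 1)) ℝ :=
      ((n * ((k : ℝ) - 1)) / (k * ((n : ℝ) - 1))) • (1 : Matrix (Fin (n - 1)) (Fin (n - 1)) ℝ)
        - (((k : ℝ) - 1) / (k * ((n : ℝ) - 1))) • (Matrix.of fun _ _ => (1 : ℝ))
    let V : Matrix (Fin n) (Fin (n - 1)) ℝ :=
      Matrix.of fun i j => if (i : ℕ) = (j : ℕ) then 1 else if (i : ℕ) = n - 1 then -1 else 0
    Rhat.PosDef ∧
    (1 / (k : ℝ)) • (Matrix.of fun _ _ => (1 : ℝ)) + V * Rhat * Vᵀ =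
      ((n * ((k : ℝ) - 1)) / (k * ((n : ℝ) - 1))) • (1 : Matrix (Fin n) (Fin n) ℝ)
        + (((n : ℝ) - k) / (k * ((n : ℝ) - 1))) • (Matrix.of fun _ _ => (1 : ℝ)) ∧
    (∀ i j, 0 < (((1 / (k : ℝ)) • (Matrix.of fun _ _ => (1 : ℝ)) + V * Rhat * Vᵀ : Matrix (Fin n) (Fin n) ℝ)) i j) := by
  intro Rhat V
  obtain ⟨m, rfl⟩ : ∃ m, n = m + 1 := ⟨n - 1, by omega⟩
  have hm2 : 2 ≤ m := by omega
  have hkm : k ≤ m := by omega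
  have hK1 : (1:ℝ) < (k:ℝ) := by exact_mod_cast (by omega : 1 < k)
  have hM : (2:ℝ) ≤ (m:ℝ) := by exact_mod_cast hm2
  have hKM : (k:ℝ) ≤ (m:ℝ) := by exact_mod_cast hkm
  have hK0 : (0:ℝ) < (k:ℝ) := by linarith
  have hM0 : (0:ℝ) < (m:ℝ) := by linarith
  have hcast : ((m + 1 : ℕ) : ℝ) - 1 = (m : ℝ) := by push_cast; ring
  set B : ℝ := ((k : ℝ) - 1) / (k * (((m + 1 : ℕ) : ℝ) - 1)) with hB_def
  set A : ℝ := (((m + 1 : ℕ) : ℝ) * ((k : ℝ) - 1)) / (k * (((m + 1 : ℕ) : ℝ) - 1)) with hA_def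
  set C : ℝ := ((((m + 1 : ℕ) : ℝ)) - k) / (k * (((m + 1 : ℕ) : ℝ) - 1)) with hC_def
  have hBpos : 0 < B := by
    rw [hB_def, hcast]
    exact div_pos (by linarith) (by positivity)
  have hAB : A = ((m : ℝ) + 1) * B := by
    rw [hA_def, hB_def, hcast]
    push_cast
    field_simp
  have hApos : 0 < A := by rw [hAB]; positivity
  have hCpos : 0 < C := by
    rw [hC_def, hcast]
    refine div_pos ?_ (by positivity)
    push_cast; linarith
  have hBC : 1 / (k:ℝ) - B = C := by
    rw [hB_def, hC_def, hcast]
    push_cast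
    field_simp
    ring
  have hentry : ∀ i i' : Fin (m + 1),
      (V * Rhat * Vᵀ) i i' = A * (if i = i' then 1 else 0) - B := by
    intro i i'
    have hstep : (V * Rhat * Vᵀ) i i' = ∑ j, (∑ l, V i l * Rhat l j) * Vᵀ j i' := by
      rw [Matrix.mul_apply]
      exact Finset.sum_congr rfl fun j _ => by rw [Matrix.mul_apply]
    rw [hstep]
    simp only [Rhat, V, Matrix.of_apply, Matrix.sub_apply, Matrix.smul_apply, Matrix.one_apply,
      smul_eq_mul, mul_one, Matrix.transpose_apply, Nat.add_sub_cancel]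
    exact key_calc m A B (by linarith) i i'
  have hpart2 : (1 / (k : ℝ)) • (Matrix.of fun _ _ => (1 : ℝ)) + V * Rhat * Vᵀ =
      A • (1 : Matrix (Fin (m + 1)) (Fin (m + 1)) ℝ)
        + C • (Matrix.of fun _ _ => (1 : ℝ)) := by
    ext i i'
    simp only [Matrix.add_apply, Matrix.smul_apply, Matrix.of_apply, smul_eq_mul, mul_one,
      Matrix.one_apply]
    rw [hentry i i']
    split_ifs <;> linarith
  refine ⟨⟨?_, ?_⟩, hpart2, ?_⟩
  · show Rhatᴴ = Rhat
    ext j l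
    simp only [Rhat, Matrix.conjTranspose_apply, Matrix.sub_apply, Matrix.smul_apply,
      Matrix.one_apply, Matrix.of_apply, smul_eq_mul, mul_one, star_sub, star_mul',
      star_one, star_zero, RCLike.star_def, conj_trivial]
    by_cases h : j = l
    · simp [h]
    · rw [if_neg h, if_neg (fun he => h he.symm)]
  · intro x hx
    have hmv : ∀ j, (Rhat *ᵥ x) j = A * x j - B * ∑ l, x l := by
      intro j
      simp only [Rhat, Matrix.mulVec, dotProduct, Matrix.sub_apply, Matrix.smul_apply,
        Matrix.one_apply, Matrix.of_apply, smul_eq_mul, mul_one]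
      rw [Finset.sum_congr rfl (fun l _ => show
        (A * (if j = l then (1:ℝ) else 0) - B) * x l
          = (if j = l then A * x l else 0) - B * x l from by split <;> ring)]
      rw [Finset.sum_sub_distrib, Finset.sum_ite_eq, ← Finset.mul_sum]
      simp
    have key : star x ⬝ᵥ (Rhat *ᵥ x)
        = A * (∑ j, x j ^ 2) - B * (∑ j, x j) ^ 2 := by
      simp only [dotProduct, Pi.star_apply, star_trivial, hmv]
      rw [Finset.sum_congr rfl (fun j _ => show
        x j * (A * x j - B * ∑ l, x l)
          = A * x j ^ 2 - (B * ∑ l, x l) * x j from by ring)]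
      rw [Finset.sum_sub_distrib, ← Finset.mul_sum, ← Finset.mul_sum]
      ring
    rw [show (x.sum fun i xi => x.sum fun j xj => star xi * Rhat i j * xj) = star ⇑x ⬝ᵥ (Rhat *ᵥ ⇑x) by
      simp [dotProduct, mulVec, Finsupp.sum_fintype, Finset.mul_sum, mul_assoc]]
    rw [key]
    have hCS : (∑ j, x j) ^ 2 ≤ (m : ℝ) * ∑ j, x j ^ 2 := by
      have h := sq_sum_le_card_mul_sum_sq (s := (Finset.univ : Finset (Fin (m + 1 - 1)))) (f := x)
      simpa using h
    have hS : 0 < ∑ j, x j ^ 2 := by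
      obtain ⟨j, hj⟩ := Function.ne_iff.mp (Finsupp.coe_eq_zero.not.mpr hx)
      exact Finset.sum_pos' (fun l _ => sq_nonneg _) ⟨j, Finset.mem_univ j, pow_two_pos_of_ne_zero hj⟩
    nlinarith [mul_le_mul_of_nonneg_left hCS hBpos.le, mul_pos hBpos hS]
  · intro i j
    rw [hpart2]
    simp only [Matrix.add_apply, Matrix.smul_apply, Matrix.of_apply, smul_eq_mul, mul_one,
      Matrix.one_apply]
    split_ifs <;> nlinarith
end

section
/- Any feasible solution X of (SDP_BP) satisfies diag(X^{11}) + diag(X^{22}) = 1_n. -/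
open Matrix

/-- Feasibility for the vector-lifting SDP relaxation (SDP_BP) of the graph
bisection problem, in block form. -/
def FeasBP (n : ℕ) (m1 m2 : ℝ) (x1 x2 : Fin n → ℝ)
    (X11 X12 X21 X22 : Matrix (Fin n) (Fin n) ℝ) : Prop :=
  (Matrix.fromBlocks (1 : Matrix Unit Unit ℝ)
      (Matrix.of fun _ j => Sum.elim x1 x2 j)
      (Matrix.of fun i _ => Sum.elim x1 x2 i)
      (Matrix.fromBlocks X11 X12 X21 X22)).PosSemidef ∧
  Matrix.trace X11 = m1 ∧ Matrix.trace X22 = m2 ∧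
  Matrix.trace ((Matrix.of fun _ _ => (1 : ℝ)) * X11) = m1 ^ 2 ∧
  Matrix.trace ((Matrix.of fun _ _ => (1 : ℝ)) * X22) = m2 ^ 2 ∧
  (∀ i, X12 i i = 0) ∧ (∀ i, X21 i i = 0) ∧
  Matrix.trace ((Matrix.of fun _ _ => (1 : ℝ)) * (X12 + X21)) = 2 * m1 * m2 ∧
  (∀ i, x1 i = X11 i i) ∧ (∀ i, x2 i = X22 i i)

/-- Any feasible solution of (SDP_BP) satisfies diag(X^{11}) + diag(X^{22}) = 1_n. -/
theorem diag_sum_eq_one_of_feasBP (n m1 m2 : ℕ) (hm1 : 0 < m1) (hm2 : 0 < m2)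
    (hmn : m1 + m2 = n) (x1 x2 : Fin n → ℝ)
    (X11 X12 X21 X22 : Matrix (Fin n) (Fin n) ℝ)
    (h : FeasBP n (m1 : ℝ) (m2 : ℝ) x1 x2 X11 X12 X21 X22) :
    ∀ i, X11 i i + X22 i i = 1 := by
  obtain ⟨hpsd, htr1, htr2, -, -, h12, h21, -, hx1, hx2⟩ := h
  have key : ∀ i, 0 ≤ 1 - (X11 i i + X22 i i) := by
    intro i
    have hv := hpsd.dotProduct_mulVec_nonneg (Sum.elim (fun _ => -(X11 i i + X22 i i))
      (Sum.elim (fun j => if j = i then (1:ℝ) else 0) (fun j => if j = i then (1:ℝ) else 0)))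
    simp only [star_trivial, dotProduct, mulVec, Fintype.sum_sum_type, Matrix.fromBlocks,
      Matrix.of_apply, Sum.elim_inl, Sum.elim_inr, mul_ite, ite_mul, mul_one, mul_zero,
      one_mul, zero_mul, Finset.sum_ite_eq', Finset.mem_univ, if_true,
      Finset.univ_unique, Finset.sum_singleton, Matrix.one_apply_eq] at hv
    rw [← hx1 i, ← hx2 i, h12 i, h21 i] at hv
    rw [← hx1 i, ← hx2 i]
    nlinarith [hv, sq_nonneg (x1 i + x2 i - 1)]
  have hsum : ∑ i, (1 - (X11 i i + X22 i i)) = 0 := by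
    have hn : ∑ i, (X11 i i + X22 i i) = (n : ℝ) := by
      rw [Finset.sum_add_distrib]
      simp only [Matrix.trace, Matrix.diag] at htr1 htr2
      rw [htr1, htr2, ← Nat.cast_add, hmn]
    simp [Finset.sum_sub_distrib, hn]
  intro i
  have := (Finset.sum_eq_zero_iff_of_nonneg (fun j _ => key j)).mp hsum i (Finset.mem_univ i)
  linarith
end

section
/- Let X ∈ S^{2n+1} be feasible for (SDP_BP) with X̂ and x as above. Then for b_i = 1_2 ⊗ u_i (u_i ∈ R^n standard basis vector, i ∈ [n]), one has b_i^T (X̂ - x x^T) b_i = 0. -/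
open Matrix

private lemma quadform_eval (n : ℕ) (x1 x2 : Fin n → ℝ)
    (X11 X12 X21 X22 : Matrix (Fin n) (Fin n) ℝ) (i : Fin n) :
    (Sum.elim (fun j => if j = i then (1 : ℝ) else 0) (fun j => if j = i then (1 : ℝ) else 0)) ⬝ᵥ
        ((Matrix.fromBlocks X11 X12 X21 X22
            - Matrix.vecMulVec (Sum.elim x1 x2) (Sum.elim x1 x2)) *ᵥ
          Sum.elim (fun j => if j = i then (1 : ℝ) else 0) (fun j => if j = i then (1 : ℝ) else 0))
    = X11 i i + X12 i i + X21 i i + X22 i i - (x1 i + x2 i)^2 := by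
  simp [dotProduct, mulVec, Fintype.sum_sum_type, Matrix.sub_apply, vecMulVec_apply,
    mul_ite, ite_mul, Finset.sum_ite_eq', Finset.sum_sub_distrib]
  ring

private lemma psd_ineq (n : ℕ) (x1 x2 : Fin n → ℝ)
    (X11 X12 X21 X22 : Matrix (Fin n) (Fin n) ℝ) (i : Fin n)
    (hpsd : (Matrix.fromBlocks (1 : Matrix Unit Unit ℝ)
      (Matrix.of fun _ j => Sum.elim x1 x2 j)
      (Matrix.of fun i _ => Sum.elim x1 x2 i)
      (Matrix.fromBlocks X11 X12 X21 X22)).PosSemidef) :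
    0 ≤ 1 - 2*(x1 i + x2 i) + (X11 i i + X12 i i + X21 i i + X22 i i) := by
  have := hpsd.dotProduct_mulVec_nonneg (Sum.elim (fun _ => (-1:ℝ))
    (Sum.elim (fun j => if j = i then (1 : ℝ) else 0) (fun j => if j = i then (1 : ℝ) else 0)))
  simp only [dotProduct, mulVec, Fintype.sum_sum_type, mul_ite, ite_mul,
    Finset.sum_add_distrib, Finset.sum_ite_eq', Matrix.one_apply, star_trivial,
    Finset.mem_univ, if_true, mul_one, mul_zero, one_mul, zero_mul, mul_neg, neg_mul,
    Finset.sum_neg_distrib, Sum.elim_inl, Sum.elim_inr, fromBlocks_apply₁₁,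
    fromBlocks_apply₁₂, fromBlocks_apply₂₁, fromBlocks_apply₂₂, of_apply,
    Finset.univ_unique, Finset.sum_singleton, neg_neg] at this
  linarith

/-- For X feasible for (SDP_BP), with b_i = 1_2 ⊗ u_i one has
b_iᵀ (X̂ - x xᵀ) b_i = 0 for all i ∈ [n]. -/
theorem quadform_zero_pair_basis (n m1 m2 : ℕ) (hm1 : 0 < m1) (hm2 : 0 < m2)
    (hmn : m1 + m2 = n) (x1 x2 : Fin n → ℝ)
    (X11 X12 X21 X22 : Matrix (Fin n) (Fin n) ℝ)
    (h : FeasBP n (m1 : ℝ) (m2 : ℝ) x1 x2 X11 X12 X21 X22) :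
    ∀ i : Fin n,
      (Sum.elim (fun j => if j = i then (1 : ℝ) else 0) (fun j => if j = i then (1 : ℝ) else 0)) ⬝ᵥ
        ((Matrix.fromBlocks X11 X12 X21 X22
            - Matrix.vecMulVec (Sum.elim x1 x2) (Sum.elim x1 x2)) *ᵥ
          Sum.elim (fun j => if j = i then (1 : ℝ) else 0) (fun j => if j = i then (1 : ℝ) else 0)) = 0 := by
  obtain ⟨hpsd, ht11, ht22, -, -, h12, h21, -, hd1, hd2⟩ := h
  -- each pair sum is at most 1
  have hle : ∀ i : Fin n, x1 i + x2 i ≤ 1 := by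
    intro i
    have := psd_ineq n x1 x2 X11 X12 X21 X22 i hpsd
    rw [h12 i, h21 i, ← hd1 i, ← hd2 i] at this
    linarith
  -- the pair sums add up to n
  have hsum : ∑ i, (x1 i + x2 i) = (n : ℝ) := by
    have : ∑ i, (x1 i + x2 i) = Matrix.trace X11 + Matrix.trace X22 := by
      simp [Matrix.trace, Matrix.diag, Finset.sum_add_distrib]
      rw [Finset.sum_congr rfl fun i _ => hd1 i, Finset.sum_congr rfl fun i _ => hd2 i]
    rw [this, ht11, ht22, ← Nat.cast_add, hmn]
  -- hence each pair sum equals 1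
  have hone : ∀ i : Fin n, x1 i + x2 i = 1 := by
    by_contra hcon
    push_neg at hcon
    obtain ⟨j, hj⟩ := hcon
    have hjlt : x1 j + x2 j < 1 := lt_of_le_of_ne (hle j) hj
    have : ∑ i, (x1 i + x2 i) < ∑ _i : Fin n, (1 : ℝ) :=
      Finset.sum_lt_sum (fun i _ => hle i) ⟨j, Finset.mem_univ j, hjlt⟩
    rw [hsum] at this
    simp at this
  intro i
  rw [quadform_eval, h12 i, h21 i, ← hd1 i, ← hd2 i]
  have := hone i
  nlinarith [hone i]
end
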